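/- Let t ≥ 2 be an integer and p an odd prime with (t, p) ≠ (2, 3). Then the quadruple (t, p, (t^p − t)/p, 1) is a prefix polymorphism. In particular, there exist prefix polymorphisms (x, n, B, k) with n arbitrarily large. -/

import Mathlib

/-- A quadruple `(x, n, B, k)` of positive integers with `B ≥ 2` is a *prefix
polymorphism* if `x^n = B^k·n + x` and `B^(k-1) ≤ x < B^k` (i.e. `x` has exactly
`k` digits in base `B`). -/
def IsPrefixPolymorphism (x n B k : ℕ) : Prop :=
  0 < x ∧ 0 < n ∧ 2 ≤ B ∧ 0 < k ∧
    x ^ n = B ^ k * n + x ∧ B ^ (k - 1) ≤ x ∧ x < B ^ k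

lemma aux_two_pow : ∀ m : ℕ, 4 ≤ m → m + 2 < 2 ^ m := by
  intro m hm
  induction m with
  | zero => omega
  | succ n ih =>
    rcases Nat.lt_or_ge n 4 with h | h
    · interval_cases n <;> simp_all
    · have := ih h
      have : 2 ^ (n + 1) = 2 * 2 ^ n := by ring
      omega

lemma main_lemma (t p : ℕ) (ht : 2 ≤ t) (hp : p.Prime) (hodd : Odd p)
    (hne : ¬(t = 2 ∧ p = 3)) : IsPrefixPolymorphism t p ((t ^ p - t) / p) 1 := by
  haveI := Fact.mk hp
  have hp2 : 2 ≤ p := hp.two_le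
  have hp3 : 3 ≤ p := by rcases hodd with ⟨j, hj⟩; omega
  have ht1 : t ≤ t ^ p := Nat.le_self_pow (by omega) t
  have hdvd : p ∣ t ^ p - t := by
    have h1 : ((t : ZMod p)) ^ p = t := ZMod.pow_card _
    have h2 : ((t ^ p - t : ℕ) : ZMod p) = 0 := by
      push_cast [Nat.cast_sub ht1]
      rw [h1]; ring
    exact (ZMod.natCast_eq_zero_iff _ _).mp h2
  obtain ⟨B, hpB⟩ := hdvd
  have hBdef : (t ^ p - t) / p = B := by
    rw [hpB]; exact Nat.mul_div_cancel_left B (by omega)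
  rw [hBdef]
  have hpB' : p * B + t = t ^ p := by
    rw [← hpB]; exact Nat.sub_add_cancel ht1
  -- key inequality
  have hkey : p + 1 < t ^ (p - 1) := by
    rcases eq_or_ne p 3 with rfl | hp5
    · have ht3 : 3 ≤ t := by omega
      have : 3 ^ 2 ≤ t ^ 2 := Nat.pow_le_pow_left ht3 2
      simpa using by omega
    · have hp5' : 5 ≤ p := by rcases hodd with ⟨j, hj⟩; omega
      have h4 : 4 ≤ p - 1 := by omega
      have h1 : (p - 1) + 2 < 2 ^ (p - 1) := aux_two_pow _ h4
      have h2 : 2 ^ (p - 1) ≤ t ^ (p - 1) := Nat.pow_le_pow_left ht _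
      omega
  have hpow : t ^ p = t ^ (p - 1) * t := by
    rw [← pow_succ]
    congr 1
    omega
  have hbig : t * p + t < t ^ p := by
    have h0 : 0 < t := by omega
    have h1 : t * (p + 1) < t * t ^ (p - 1) := by
      exact Nat.mul_lt_mul_of_le_of_lt (le_refl t) hkey h0
    nlinarith [hpow]
  have htB : t < B := by
    have h2 : p * t < p * B := by nlinarith [Nat.mul_comm t p]
    exact lt_of_mul_lt_mul_left h2 (Nat.zero_le p)
  refine ⟨by omega, by omega, by omega, by omega, ?_, ?_, ?_⟩
  · rw [pow_one, Nat.mul_comm B p]; omega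
  · rw [pow_zero]; omega
  · rw [pow_one]; exact htB

/-- For an integer `t ≥ 2` and an odd prime `p` with `(t, p) ≠ (2, 3)`, the
quadruple `(t, p, (t^p - t)/p, 1)` is a prefix polymorphism. In particular,
there exist prefix polymorphisms with arbitrarily large `n`. -/
theorem fermat_prime_family :
    (∀ t p : ℕ, 2 ≤ t → p.Prime → Odd p → ¬(t = 2 ∧ p = 3) →
      IsPrefixPolymorphism t p ((t ^ p - t) / p) 1) ∧
    ∀ N : ℕ, ∃ x n B k : ℕ, N ≤ n ∧ IsPrefixPolymorphism x n B k := by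
  refine ⟨main_lemma, ?_⟩
  intro N
  obtain ⟨p, hpN, hp⟩ := Nat.exists_infinite_primes (max N 5)
  have h5 : 5 ≤ p := le_trans (le_max_right _ _) hpN
  have hodd : Odd p := hp.odd_of_ne_two (by omega)
  exact ⟨2, p, (2 ^ p - 2) / p, 1, le_trans (le_max_left _ _) hpN,
    main_lemma 2 p (by omega) hp hodd (by omega)⟩
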